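/- Suppose (𝔤, 𝔥) is a matched pair of Lie algebras with actions ▷ : 𝔥 ⊗ 𝔤 → 𝔤 and ▷ : 𝔤 ⊗ 𝔥 → 𝔥, writing x ▷ κ for the 𝔤-action on 𝔥. Then the bracket on 𝔤 ⊕ 𝔥 defined by [(x,κ),(y,λ)] = ([x,y] + κ ▷ y − λ ▷ x, [κ,λ] + x ▷ λ − y ▷ κ) satisfies the Jacobi identity if and only if the matched pair conditions hold: κ ▷ [x,y] = [x, κ ▷ y] − [y, κ ▷ x] + (y ▷ κ) ▷ x − (x ▷ κ) ▷ y, and x ▷ [κ,λ] = [κ, x ▷ λ] − [λ, x ▷ κ] + (λ ▷ x) ▷ κ − (κ ▷ x) ▷ λ. -/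
import Mathlib

/-- The candidate double bracket on 𝔤 ⊕ 𝔥 built from mutual actions
a : 𝔥 → End(𝔤) and b : 𝔤 → End(𝔥):
[(x,κ),(y,λ)] = ([x,y] + κ ▷ y − λ ▷ x, [κ,λ] + x ▷ λ − y ▷ κ). -/
def mpBracket {k G H : Type*} [Field k]
    [LieRing G] [LieAlgebra k G] [LieRing H] [LieAlgebra k H]
    (a : H →ₗ[k] G →ₗ[k] G) (b : G →ₗ[k] H →ₗ[k] H)
    (p q : G × H) : G × H :=
  (⁅p.1, q.1⁆ + a p.2 q.1 - a q.2 p.1, ⁅p.2, q.2⁆ + b p.1 q.2 - b q.1 p.2)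

lemma sk' {L : Type*} [LieRing L] (u v : L) : ⁅u, v⁆ = -⁅v, u⁆ := by
  rw [← lie_skew]

lemma jac3 {L : Type*} [LieRing L] (u v w : L) :
    ⁅⁅u, v⁆, w⁆ + ⁅⁅v, w⁆, u⁆ + ⁅⁅w, u⁆, v⁆ = 0 := by
  have h := lie_jacobi w v u
  rw [sk' ⁅u, v⁆ w, sk' ⁅v, w⁆ u, sk' ⁅w, u⁆ v, sk' u v, sk' v w, sk' w u]
  simp only [lie_neg, neg_neg]
  rw [show (0 : L) = ⁅w, ⁅v, u⁆⁆ + ⁅v, ⁅u, w⁆⁆ + ⁅u, ⁅w, v⁆⁆ from h.symm]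
  abel

/-- For Lie algebras 𝔤, 𝔥 with mutual Lie algebra actions,
the bracket on 𝔤 ⊕ 𝔥 satisfies the Jacobi identity if and only if the
matched pair conditions hold. -/
theorem matched_pair_iff_jacobi
    {k G H : Type*} [Field k]
    [LieRing G] [LieAlgebra k G] [LieRing H] [LieAlgebra k H]
    (a : H →ₗ[k] G →ₗ[k] G) (b : G →ₗ[k] H →ₗ[k] H)
    (ha : ∀ (κ lam : H) (x : G), a ⁅κ, lam⁆ x = a κ (a lam x) - a lam (a κ x))
    (hb : ∀ (x y : G) (κ : H), b ⁅x, y⁆ κ = b x (b y κ) - b y (b x κ)) :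
    (∀ p q r : G × H,
      mpBracket a b (mpBracket a b p q) r
        + mpBracket a b (mpBracket a b q r) p
        + mpBracket a b (mpBracket a b r p) q = 0)
    ↔
    ((∀ (κ : H) (x y : G),
        a κ ⁅x, y⁆ = ⁅x, a κ y⁆ - ⁅y, a κ x⁆ + a (b y κ) x - a (b x κ) y) ∧
     (∀ (x : G) (κ lam : H),
        b x ⁅κ, lam⁆ = ⁅κ, b x lam⁆ - ⁅lam, b x κ⁆
          + b (a lam x) κ - b (a κ x) lam)) := by
  constructor
  · intro h
    constructor
    · intro κ x y
      have h1 := congrArg Prod.fst (h (x, 0) (y, 0) (0, κ))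
      simp [mpBracket] at h1
      rw [sk' ((a κ) x) y] at h1
      rw [eq_comm, ← sub_eq_zero]
      rw [show (0 : G) = -(a κ) ⁅x, y⁆ + (⁅x, (a κ) y⁆ + (a ((b y) κ)) x) +
        (-⁅y, (a κ) x⁆ + -(a ((b x) κ)) y) from h1.symm]
      abel
    · intro x κ lam
      have h2 := congrArg Prod.snd (h (0, κ) (0, lam) (x, 0))
      simp [mpBracket] at h2
      rw [sk' ((b x) κ) lam] at h2
      rw [eq_comm, ← sub_eq_zero]
      rw [show (0 : H) = -(b x) ⁅κ, lam⁆ + (⁅κ, (b x) lam⁆ + (b ((a lam) x)) κ) +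
        (-⁅lam, (b x) κ⁆ + -(b ((a κ) x)) lam) from h2.symm]
      abel
  · rintro ⟨h1, h2⟩ ⟨x, κ⟩ ⟨y, lam⟩ ⟨z, mu⟩
    have skA : ∀ (κ : H) (u v : G), ⁅(a κ) u, v⁆ = -⁅v, (a κ) u⁆ := fun _ u v => sk' _ _
    have skB : ∀ (x : G) (u v : H), ⁅(b x) u, v⁆ = -⁅v, (b x) u⁆ := fun _ u v => sk' _ _
    refine Prod.ext ?_ ?_
    · simp only [mpBracket, Prod.fst_add, Prod.fst_zero, map_add, map_sub, LinearMap.add_apply,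
        LinearMap.sub_apply, add_lie, sub_lie, lie_add, lie_sub, ha, hb, h1, h2, skA]
      rw [show (0 : G) = ⁅⁅x, y⁆, z⁆ + ⁅⁅y, z⁆, x⁆ + ⁅⁅z, x⁆, y⁆ from (jac3 x y z).symm]
      abel
    · simp only [mpBracket, Prod.snd_add, Prod.snd_zero, map_add, map_sub, LinearMap.add_apply,
        LinearMap.sub_apply, add_lie, sub_lie, lie_add, lie_sub, ha, hb, h1, h2, skB]
      rw [show (0 : H) = ⁅⁅κ, lam⁆, mu⁆ + ⁅⁅lam, mu⁆, κ⁆ + ⁅⁅mu, κ⁆, lam⁆ from (jac3 κ lam mu).symm]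
      abel
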